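/- Let paral denote the quiver with two vertices s and t and exactly two arrows, both from s to t, and let T₁ := Cat.free ⋙ Quiv.forget be the free-category monad endofunctor on Quiv. Let P₂ : Quiv ⥤ Type be the functor sending a quiver X to the set of quiver morphisms (prefunctors) paral ⟶ T₁.obj X, i.e., the set of parallel pairs of paths in X. Then the comma category of Type over P₂ — the category whose objects are triples consisting of a type S, a quiver X, and a function S → P₂.obj X, with the evident morphisms (this is the category of 2-computads) — is a presheaf category: it is equivalent to a functor category E ⥤ Type for some small category E. -/

import Mathlib

open CategoryTheory CategoryTheory.Limits

universe u

/-- The vertices `s` and `t` of the quiver `paral`. -/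
inductive ParalVertex : Type u | s | t

/-- The arrows of the quiver `paral`: exactly two arrows, both from `s` to `t`. -/
inductive ParalArrow : ParalVertex.{u} → ParalVertex.{u} → Type u
  | a : ParalArrow .s .t
  | b : ParalArrow .s .t

instance : Quiver.{u} ParalVertex.{u} := ⟨ParalArrow⟩

/-- The quiver with two vertices `s`, `t` and exactly two arrows, both from `s` to `t`. -/
def paral : Quiv.{u, u} := Quiv.of ParalVertex.{u}

/-- The functor sending a quiver `X` to the set of quiver morphisms
`paral ⟶ T₁.obj X`, where `T₁ := Cat.free ⋙ Quiv.forget` is the free-category monad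
endofunctor; i.e. the set of parallel pairs of paths in `X`. -/
def parallelPairsOfPaths : Quiv.{u, u} ⥤ Type u :=
  (Cat.free ⋙ Quiv.forget) ⋙ coyoneda.obj (Opposite.op paral.{u})

/-!
Sort the 2-cells of a 2-computad by the lengths `(m, n)` of their two boundary paths. A parallel
pair of paths of lengths `m` and `n` in a quiver `X` is the same as a family of vertices and edges
of `X` indexed by the vertices and edges of the generic cell (two paths of lengths `m` and `n`
glued at their endpoints), compatible with sources and targets; the only nontrivial point is that
a path is recovered from its sequence of vertices and edges. Hence a 2-computad is the same as a
functor to `Type` on the category `Shape` with objects `vertex`, `arrow` and `cell m n`, whose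
morphisms pick out the source and target of the arrow and the vertices and edges of a cell.
-/

abbrev TwoComputad := Comma (𝟭 (Type u)) parallelPairsOfPaths.{u}

namespace Quiver

variable {V : Type*} [Quiver V]

namespace Path

/-- The `k`-th vertex of a path; it is the target of the path for every `k ≥ p.length`. -/
def getVert {a : V} : ∀ {b : V}, Path a b → ℕ → V
  | _, .nil, _ => a
  | b, .cons p _, k => if k ≤ p.length then p.getVert k else b

def getEdge {a : V} : ∀ {b : V} (p : Path a b) (k : ℕ), k < p.length → Total V
  | _, .nil, _, h => absurd h (Nat.not_lt_zero _)
  | _, .cons p f, k, _ => if h : k < p.length then p.getEdge k h else ⟨_, _, f⟩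

variable {a b c : V}

lemma getVert_cons_of_le (p : Path a b) (f : b ⟶ c) {k : ℕ} (hk : k ≤ p.length) :
    (p.cons f).getVert k = p.getVert k := if_pos hk

lemma getVert_cons_of_lt (p : Path a b) (f : b ⟶ c) {k : ℕ} (hk : p.length < k) :
    (p.cons f).getVert k = c := if_neg (Nat.not_le.mpr hk)

@[simp]
lemma getVert_zero (p : Path a b) : p.getVert 0 = a := by
  induction p with
  | nil => rfl
  | cons p f ih => rw [getVert_cons_of_le p f (Nat.zero_le _), ih]

lemma getVert_of_length_le (p : Path a b) {k : ℕ} (hk : p.length ≤ k) : p.getVert k = b := by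
  cases p with
  | nil => rfl
  | cons p f => exact getVert_cons_of_lt p f (by rw [length_cons] at hk; omega)

lemma getEdge_cons_of_lt (p : Path a b) (f : b ⟶ c) {k : ℕ} (hk : k < p.length) :
    (p.cons f).getEdge k (by rw [length_cons]; omega) = p.getEdge k hk := dif_pos hk

lemma getEdge_cons_length (p : Path a b) (f : b ⟶ c) :
    (p.cons f).getEdge p.length (by rw [length_cons]; omega) = ⟨b, c, f⟩ :=
  dif_neg (lt_irrefl _)

lemma getEdge_cons_of_length_eq (p : Path a b) (f : b ⟶ c) {k : ℕ} (hk : p.length = k) :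
    (p.cons f).getEdge k (by rw [length_cons]; omega) = ⟨b, c, f⟩ := by
  subst hk
  exact getEdge_cons_length p f

lemma getEdge_left : ∀ {b : V} (p : Path a b) (k : ℕ) (hk : k < p.length),
    (p.getEdge k hk).left = p.getVert k
  | _, .nil, _, hk => absurd hk (Nat.not_lt_zero _)
  | _, .cons p f, k, hk => by
    obtain hk' | rfl : k < p.length ∨ k = p.length := by rw [length_cons] at hk; omega
    · rw [getEdge_cons_of_lt p f hk', getVert_cons_of_le p f hk'.le, getEdge_left]
    · rw [getEdge_cons_length, getVert_cons_of_le p f le_rfl, getVert_of_length_le p le_rfl]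

lemma getEdge_right : ∀ {b : V} (p : Path a b) (k : ℕ) (hk : k < p.length),
    (p.getEdge k hk).right = p.getVert (k + 1)
  | _, .nil, _, hk => absurd hk (Nat.not_lt_zero _)
  | _, .cons p f, k, hk => by
    obtain hk' | rfl : k < p.length ∨ k = p.length := by rw [length_cons] at hk; omega
    · rw [getEdge_cons_of_lt p f hk', getVert_cons_of_le p f hk', getEdge_right]
    · rw [getEdge_cons_length, getVert_cons_of_lt p f (Nat.lt_succ_self _)]

lemma heq_of_getEdge_eq {a' : V} : ∀ {b b' : V} {p : Path a b} {q : Path a' b'}, a = a' →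
    p.length = q.length → (∀ k hp hq, p.getEdge k hp = q.getEdge k hq) → p ≍ q
  | _, _, .nil, .nil, rfl, _, _ => .rfl
  | _, _, .nil, .cons _ _, _, hl, _ => by simp at hl
  | _, _, .cons _ _, .nil, _, hl, _ => by simp at hl
  | _, _, .cons p f, .cons q g, ha, hl, he => by
    simp only [length_cons, Nat.add_right_cancel_iff] at hl
    have hpq : p ≍ q := heq_of_getEdge_eq ha hl fun k hp hq => by
      simpa only [getEdge_cons_of_lt _ _ hp, getEdge_cons_of_lt _ _ hq] using
        he k (by simp; omega) (by simp; omega)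
    have hfg := he p.length (by simp) (by simp; omega)
    rw [getEdge_cons_length, getEdge_cons_of_length_eq q g hl.symm] at hfg
    cases hfg
    subst ha
    cases eq_of_heq hpq
    rfl

lemma length_cast {a' b' : V} (ha : a = a') (hb : b = b') (p : Path a b) :
    (p.cast ha hb).length = p.length := by
  subst ha hb; rfl

lemma getVert_cast {a' b' : V} (ha : a = a') (hb : b = b') (p : Path a b) (k : ℕ) :
    (p.cast ha hb).getVert k = p.getVert k := by
  subst ha hb; rfl

lemma getEdge_cast {a' b' : V} (ha : a = a') (hb : b = b') (p : Path a b) (k : ℕ)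
    (hk : k < p.length) : (p.cast ha hb).getEdge k (by rwa [length_cast]) = p.getEdge k hk := by
  subst ha hb; rfl

end Path

end Quiver

namespace Prefunctor

open Quiver

variable {V : Type*} [Quiver V] {W : Type*} [Quiver W] (F : V ⥤q W) {a b : V}

def mapTotal (e : Total V) : Total W := ⟨F.obj e.left, F.obj e.right, F.map e.hom⟩

@[simp]
lemma length_mapPath (p : Path a b) : (F.mapPath p).length = p.length := by
  induction p with
  | nil => rfl
  | cons p f ih => simp [mapPath_cons, ih]

lemma getVert_mapPath (p : Path a b) (k : ℕ) :
    (F.mapPath p).getVert k = F.obj (p.getVert k) := by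
  induction p with
  | nil => rfl
  | cons p f ih =>
    rw [mapPath_cons]
    by_cases hk : k ≤ p.length
    · rw [Path.getVert_cons_of_le _ _ (by simpa), Path.getVert_cons_of_le _ _ hk, ih]
    · rw [Path.getVert_cons_of_lt _ _ (by simp; omega), Path.getVert_cons_of_lt _ _ (by omega)]

lemma getEdge_mapPath (p : Path a b) (k : ℕ) (hk : k < p.length) :
    (F.mapPath p).getEdge k (by simpa) = F.mapTotal (p.getEdge k hk) := by
  induction p with
  | nil => exact absurd hk (Nat.not_lt_zero _)
  | cons p f ih =>
    simp only [mapPath_cons]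
    obtain hk' | rfl : k < p.length ∨ k = p.length := by rw [Path.length_cons] at hk; omega
    · rw [Path.getEdge_cons_of_lt _ _ (by simpa), Path.getEdge_cons_of_lt _ _ hk', ih]
    · rw [Path.getEdge_cons_of_length_eq _ _ (by simp), Path.getEdge_cons_length]
      rfl

lemma mapPath_cast_heq {a' b' : V} (ha : a = a') (hb : b = b') (p : Path a b) :
    F.mapPath (p.cast ha hb) ≍ F.mapPath p := by
  subst ha hb; rfl

end Prefunctor

namespace TwoComputad

open Quiver

structure Multigraph where
  V : Type u
  E : Type u
  src : E → V
  tgt : E → V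

namespace Multigraph

variable (G : Multigraph.{u})

instance : Quiver.{u} G.V := ⟨fun a b => { e : G.E // G.src e = a ∧ G.tgt e = b }⟩

def totalEquiv : Total G.V ≃ G.E where
  toFun e := e.hom.1
  invFun e := ⟨G.src e, G.tgt e, e, rfl, rfl⟩
  left_inv := by
    rintro ⟨_, _, e, rfl, rfl⟩
    rfl
  right_inv _ := rfl

lemma total_ext {x y : Total G.V} (h : x.hom.1 = y.hom.1) : x = y :=
  G.totalEquiv.injective h

def path : ∀ (m : ℕ) (v : Fin (m + 1) → G.V) (e : Fin m → G.E),
    (∀ i, G.src (e i) = v i.castSucc) → (∀ i, G.tgt (e i) = v i.succ) →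
      Path (v 0) (v (Fin.last m))
  | 0, _, _, _, _ => .nil
  | m + 1, v, e, hs, ht =>
    (path m (fun i => v i.castSucc) (fun i => e i.castSucc) (fun i => hs i.castSucc)
      (fun i => ht i.castSucc)).cons ⟨e (Fin.last m), hs _, ht _⟩

@[simp]
lemma length_path : ∀ (m : ℕ) (v : Fin (m + 1) → G.V) (e : Fin m → G.E) hs ht,
    (G.path m v e hs ht).length = m
  | 0, _, _, _, _ => rfl
  | m + 1, _, _, _, _ => congrArg (· + 1) (length_path m _ _ _ _)

lemma getVert_path : ∀ (m : ℕ) (v : Fin (m + 1) → G.V) (e : Fin m → G.E) hs ht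
    (k : Fin (m + 1)), (G.path m v e hs ht).getVert k = v k
  | 0, v, _, _, _, k => by rw [Fin.fin_one_eq_zero k]; rfl
  | m + 1, v, e, hs, ht, k => by
    rcases Fin.eq_castSucc_or_eq_last k with ⟨j, rfl⟩ | rfl
    · exact (Path.getVert_cons_of_le _ _ (j.is_le.trans_eq (length_path ..).symm)).trans
        (getVert_path m _ _ _ _ j)
    · exact Path.getVert_cons_of_lt _ _ ((length_path ..).trans_lt (Nat.lt_succ_self m))

lemma getEdge_path : ∀ (m : ℕ) (v : Fin (m + 1) → G.V) (e : Fin m → G.E) hs ht (k : Fin m),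
    (G.path m v e hs ht).getEdge k (by simp) = ⟨v k.castSucc, v k.succ, ⟨e k, hs k, ht k⟩⟩
  | 0, _, _, _, _, k => k.elim0
  | m + 1, v, e, hs, ht, k => by
    rcases Fin.eq_castSucc_or_eq_last k with ⟨j, rfl⟩ | rfl
    · exact (Path.getEdge_cons_of_lt _ _ (j.isLt.trans_eq (length_path ..).symm)).trans
        (getEdge_path m _ _ _ _ j)
    · exact Path.getEdge_cons_of_length_eq _ _ (length_path ..)

lemma path_congr (m : ℕ) {v v' : Fin (m + 1) → G.V} {e e' : Fin m → G.E} (hv : v = v')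
    (he : e = e') (hs ht hs' ht') : G.path m v e hs ht ≍ G.path m v' e' hs' ht' := by
  subst hv he; rfl

variable {G} in
structure Hom (G' : Multigraph.{u}) where
  onV : G.V → G'.V
  onE : G.E → G'.E
  src_onE : ∀ e, G'.src (onE e) = onV (G.src e)
  tgt_onE : ∀ e, G'.tgt (onE e) = onV (G.tgt e)

variable {G} {G' : Multigraph.{u}}

def Hom.toPrefunctor (μ : G.Hom G') : G.V ⥤q G'.V where
  obj := μ.onV
  map e := ⟨μ.onE e.1, by rw [μ.src_onE, e.2.1], by rw [μ.tgt_onE, e.2.2]⟩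

lemma Hom.mapPath_path (μ : G.Hom G') :
    ∀ (m : ℕ) (v : Fin (m + 1) → G.V) (e : Fin m → G.E) hs ht,
      μ.toPrefunctor.mapPath (G.path m v e hs ht) =
        G'.path m (fun i => μ.onV (v i)) (fun i => μ.onE (e i))
          (fun i => by rw [μ.src_onE, hs]) (fun i => by rw [μ.tgt_onE, ht])
  | 0, _, _, _, _ => rfl
  | m + 1, _, _, _, _ => (Prefunctor.mapPath_cons _ _ _).trans
      (congrArg (fun p => Path.cons p _) (Hom.mapPath_path μ m _ _ _ _))

section ofQuiver

variable (X : Type u) [Quiver.{u} X]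

def ofQuiver : Multigraph.{u} :=
  ⟨X, Total X, Total.left, Total.right⟩

def ofQuiverHomEquiv (a b : X) : (a ⟶ b) ≃ { e : Total X // e.left = a ∧ e.right = b } where
  toFun f := ⟨⟨a, b, f⟩, rfl, rfl⟩
  invFun e := e.1.hom.cast e.2.1 e.2.2
  left_inv _ := rfl
  right_inv := by
    rintro ⟨⟨_, _, f⟩, rfl, rfl⟩
    rfl

def toOfQuiver : X ⥤q (ofQuiver X).V where
  obj a := a
  map {a b} := ofQuiverHomEquiv X a b

def ofQuiverIso : Quiv.of X ≅ Quiv.of (ofQuiver X).V :=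
  Quiv.isoOfEquiv (Equiv.refl X) (ofQuiverHomEquiv X)

variable {X}

lemma path_getEdge_heq {a b : X} (p : Path a b) :
    (ofQuiver X).path p.length (fun i => p.getVert i) (fun i => p.getEdge i i.isLt)
      (fun i => p.getEdge_left i i.isLt) (fun i => p.getEdge_right i i.isLt) ≍
      (toOfQuiver X).mapPath p := by
  refine Path.heq_of_getEdge_eq p.getVert_zero
    ((length_path ..).trans ((toOfQuiver X).length_mapPath p).symm)
    fun k _ hk => total_ext _ ?_
  rw [Prefunctor.length_mapPath] at hk
  exact (congrArg (fun e => e.hom.1) ((ofQuiver X).getEdge_path _ (fun i => p.getVert i)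
    (fun i => p.getEdge i i.isLt) _ _ ⟨k, hk⟩)).trans
    (congrArg (fun e => e.hom.1) ((toOfQuiver X).getEdge_mapPath p k hk)).symm

end ofQuiver

end Multigraph

/-- The vertices of the generic `(m, n)`-cell: a path of length `m` and a path of length `n`,
glued at their sources and at their targets. -/
def CellVert (m n : ℕ) : Type :=
  Quot fun x y : Fin (m + 1) ⊕ Fin (n + 1) =>
    x = .inl 0 ∧ y = .inr 0 ∨ x = .inl (Fin.last m) ∧ y = .inr (Fin.last n)

namespace CellVert

variable {m n : ℕ}

def ofFst (i : Fin (m + 1)) : CellVert m n := Quot.mk _ (.inl i)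

def ofSnd (i : Fin (n + 1)) : CellVert m n := Quot.mk _ (.inr i)

lemma ofSnd_zero : (ofSnd 0 : CellVert m n) = ofFst 0 :=
  (Quot.sound (.inl ⟨rfl, rfl⟩)).symm

lemma ofSnd_last : (ofSnd (Fin.last n) : CellVert m n) = ofFst (Fin.last m) :=
  (Quot.sound (.inr ⟨rfl, rfl⟩)).symm

def edgeSrc : Fin m ⊕ Fin n → CellVert m n
  | .inl i => ofFst i.castSucc
  | .inr j => ofSnd j.castSucc

def edgeTgt : Fin m ⊕ Fin n → CellVert m n
  | .inl i => ofFst i.succ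
  | .inr j => ofSnd j.succ

end CellVert

/-- `cell m n` stands for the generic 2-cell whose boundary paths have lengths `m` and `n`. -/
inductive Shape : Type u
  | vertex
  | arrow
  | cell (m n : ℕ)

namespace Shape

inductive Hom : Shape.{u} → Shape.{u} → Type u
  | id (X : Shape) : Hom X X
  | src : Hom arrow vertex
  | tgt : Hom arrow vertex
  | vertex {m n : ℕ} (i : CellVert m n) : Hom (cell m n) vertex
  | edge {m n : ℕ} (i : Fin m ⊕ Fin n) : Hom (cell m n) arrow

def Hom.comp : ∀ {X Y Z : Shape.{u}}, Hom X Y → Hom Y Z → Hom X Z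
  | _, _, _, .id _, g => g
  | _, _, _, f, .id _ => f
  | _, _, _, .edge i, .src => .vertex (CellVert.edgeSrc i)
  | _, _, _, .edge i, .tgt => .vertex (CellVert.edgeTgt i)

instance : SmallCategory Shape.{u} where
  Hom := Hom
  id := Hom.id
  comp := Hom.comp
  comp_id f := by cases f <;> rfl
  assoc f g h := by cases f <;> cases g <;> cases h <;> rfl

end Shape

section Boundary

variable {X : Quiv.{u, u}}

def pathA (φ : parallelPairsOfPaths.obj X) : Path (V := X) (φ.obj .s) (φ.obj .t) := φ.map .a

def pathB (φ : parallelPairsOfPaths.obj X) : Path (V := X) (φ.obj .s) (φ.obj .t) := φ.map .b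

end Boundary

lemma paral_hom_ext {Y : Quiv.{u, u}} {φ ψ : paral.{u} ⟶ Y} (hs : φ.obj .s = ψ.obj .s)
    (ht : φ.obj .t = ψ.obj .t) (ha : φ.map .a ≍ ψ.map .a) (hb : φ.map .b ≍ ψ.map .b) :
    φ = ψ := by
  obtain ⟨φobj, φmap⟩ := φ
  obtain ⟨ψobj, ψmap⟩ := ψ
  obtain rfl : φobj = ψobj := funext fun | .s => hs | .t => ht
  obtain rfl : @φmap = @ψmap := by
    funext v w f
    obtain _ | _ := f
    exacts [eq_of_heq ha, eq_of_heq hb]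
  rfl

section ToPresheaf

variable (c : TwoComputad.{u})

def cells : Shape.{u} → Type u
  | .vertex => c.right
  | .arrow => Total c.right
  | .cell m n => { x : c.left // (pathA (c.hom x)).length = m ∧ (pathB (c.hom x)).length = n }

variable {c} {m n : ℕ}

def cellVertex (x : c.cells (.cell m n)) : CellVert m n → c.right :=
  Quot.lift
    (Sum.elim (fun i => (pathA (c.hom x.1)).getVert i) fun i => (pathB (c.hom x.1)).getVert i)
    (by
      rintro _ _ (⟨rfl, rfl⟩ | ⟨rfl, rfl⟩)
      · exact (Path.getVert_zero _).trans (Path.getVert_zero _).symm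
      · exact (Path.getVert_of_length_le _ x.2.1.le).trans
          (Path.getVert_of_length_le _ x.2.2.le).symm)

def cellEdge (x : c.cells (.cell m n)) : Fin m ⊕ Fin n → Total c.right
  | .inl i => (pathA (c.hom x.1)).getEdge i (i.isLt.trans_eq x.2.1.symm)
  | .inr i => (pathB (c.hom x.1)).getEdge i (i.isLt.trans_eq x.2.2.symm)

variable (c) in
def cellsMap : ∀ {X Y : Shape.{u}}, (X ⟶ Y) → c.cells X → c.cells Y
  | _, _, .id _ => id
  | _, _, .src => Total.left
  | _, _, .tgt => Total.right
  | _, _, .vertex i => fun x => cellVertex x i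
  | _, _, .edge i => fun x => cellEdge x i

variable (c) in
def toPresheaf : Shape.{u} ⥤ Type u where
  obj := c.cells
  map f := TypeCat.ofHom (c.cellsMap f)
  map_comp {X Y Z} (f : Shape.Hom X Y) (g : Shape.Hom Y Z) := by
    cases f <;> cases g <;> try rfl
    case edge.src i =>
      ext x
      rcases i with i | i <;> exact (Path.getEdge_left (V := c.right) _ _ _).symm
    case edge.tgt i =>
      ext x
      rcases i with i | i <;> exact (Path.getEdge_right (V := c.right) _ _ _).symm

end ToPresheaf

section ToPresheafFunctor

variable {c d : TwoComputad.{u}} (φ : c ⟶ d)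

section

variable (x : c.left) (ar : ParalArrow.{u} .s .t)

lemma hom_left_apply : d.hom (φ.left x) = parallelPairsOfPaths.map φ.right (c.hom x) :=
  types_congr_hom φ.w x

lemma length_hom_left_map :
    ((d.hom (φ.left x)).map ar).length = ((c.hom x).map ar).length := by
  rw [hom_left_apply]
  exact φ.right.length_mapPath _

lemma getVert_hom_left_map (k : ℕ) :
    ((d.hom (φ.left x)).map ar).getVert k = φ.right.obj (((c.hom x).map ar).getVert k) := by
  rw [hom_left_apply]
  exact φ.right.getVert_mapPath _ k

lemma getEdge_hom_left_map (k : ℕ) (hk : k < ((d.hom (φ.left x)).map ar).length)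
    (hk' : k < ((c.hom x).map ar).length) :
    ((d.hom (φ.left x)).map ar).getEdge k hk =
      φ.right.mapTotal (((c.hom x).map ar).getEdge k hk') := by
  revert hk
  rw [hom_left_apply]
  exact fun _ => φ.right.getEdge_mapPath _ k hk'

end

def mapCells : ∀ X : Shape.{u}, c.cells X → d.cells X
  | .vertex => φ.right.obj
  | .arrow => φ.right.mapTotal
  | .cell _ _ => fun x => ⟨φ.left x.1, (length_hom_left_map φ x.1 .a).trans x.2.1,
      (length_hom_left_map φ x.1 .b).trans x.2.2⟩

end ToPresheafFunctor

def toPresheafFunctor : TwoComputad.{u} ⥤ (Shape.{u} ⥤ Type u) where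
  obj := toPresheaf
  map φ :=
    { app X := TypeCat.ofHom (mapCells φ X)
      naturality X Y (f : Shape.Hom X Y) := by
        cases f with
        | vertex i =>
          ext x
          induction i using Quot.ind with
          | mk i => rcases i with i | i <;> exact (getVert_hom_left_map φ x.1 _ i).symm
        | edge i =>
          ext x
          rcases i with i | i <;> exact (getEdge_hom_left_map φ x.1 _ i _ _).symm
        | _ => rfl }
  map_id _ := NatTrans.ext (funext fun X => by cases X <;> rfl)
  map_comp _ _ := NatTrans.ext (funext fun X => by cases X <;> rfl)

section OfPresheaf

variable (F : Shape.{u} ⥤ Type u)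

def multigraph : Multigraph.{u} := ⟨F.obj .vertex, F.obj .arrow, F.map .src, F.map .tgt⟩

variable {F} {m n : ℕ} (x : F.obj (.cell m n))

def vertexOf (i : CellVert m n) : (multigraph F).V := F.map (.vertex i) x

def edgeOf (i : Fin m ⊕ Fin n) : (multigraph F).E := F.map (.edge i) x

lemma src_edgeOf (i : Fin m ⊕ Fin n) :
    (multigraph F).src (edgeOf x i) = vertexOf x (CellVert.edgeSrc i) :=
  (types_congr_hom (F.map_comp (Shape.Hom.edge i) .src) x).symm

lemma tgt_edgeOf (i : Fin m ⊕ Fin n) :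
    (multigraph F).tgt (edgeOf x i) = vertexOf x (CellVert.edgeTgt i) :=
  (types_congr_hom (F.map_comp (Shape.Hom.edge i) .tgt) x).symm

def pathAOf : Path (vertexOf x (.ofFst 0)) (vertexOf x (.ofFst (Fin.last m))) :=
  (multigraph F).path m (fun i => vertexOf x (.ofFst i)) (fun i => edgeOf x (.inl i))
    (fun i => src_edgeOf x (.inl i)) (fun i => tgt_edgeOf x (.inl i))

def pathBOf : Path (vertexOf x (.ofSnd 0)) (vertexOf x (.ofSnd (Fin.last n))) :=
  (multigraph F).path n (fun i => vertexOf x (.ofSnd i)) (fun i => edgeOf x (.inr i))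
    (fun i => src_edgeOf x (.inr i)) (fun i => tgt_edgeOf x (.inr i))

def boundaryOf : parallelPairsOfPaths.obj (Quiv.of (multigraph F).V) where
  obj
    | .s => vertexOf x (.ofFst 0)
    | .t => vertexOf x (.ofFst (Fin.last m))
  map {v w} f := match v, w, f with
    | _, _, .a => pathAOf x
    | _, _, .b => (pathBOf x).cast (congrArg (vertexOf x) CellVert.ofSnd_zero)
        (congrArg (vertexOf x) CellVert.ofSnd_last)

variable (F) in
def ofPresheaf : TwoComputad.{u} where
  left := Σ m n : ℕ, F.obj (.cell m n)
  right := Quiv.of (multigraph F).V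
  hom := TypeCat.ofHom fun x => boundaryOf x.2.2

end OfPresheaf

section OfPresheafFunctor

variable {F F' : Shape.{u} ⥤ Type u} (η : F ⟶ F')

def multigraphHom : (multigraph F).Hom (multigraph F') where
  onV := η.app .vertex
  onE := η.app .arrow
  src_onE e := (types_congr_hom (η.naturality .src) e).symm
  tgt_onE e := (types_congr_hom (η.naturality .tgt) e).symm

variable {m n : ℕ} (x : F.obj (.cell m n))

lemma vertexOf_app (i : CellVert m n) :
    vertexOf (η.app _ x) i = η.app .vertex (vertexOf x i) :=
  (types_congr_hom (η.naturality (.vertex i)) x).symm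

lemma edgeOf_app (i : Fin m ⊕ Fin n) : edgeOf (η.app _ x) i = η.app .arrow (edgeOf x i) :=
  (types_congr_hom (η.naturality (.edge i)) x).symm

lemma mapPath_pathAOf :
    (multigraphHom η).toPrefunctor.mapPath (pathAOf x) ≍ pathAOf (η.app _ x) :=
  (heq_of_eq ((multigraphHom η).mapPath_path ..)).trans
    ((multigraph F').path_congr m (funext fun _ => (vertexOf_app η x _).symm)
      (funext fun _ => (edgeOf_app η x _).symm) _ _ _ _)

lemma mapPath_pathBOf :
    (multigraphHom η).toPrefunctor.mapPath (pathBOf x) ≍ pathBOf (η.app _ x) :=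
  (heq_of_eq ((multigraphHom η).mapPath_path ..)).trans
    ((multigraph F').path_congr n (funext fun _ => (vertexOf_app η x _).symm)
      (funext fun _ => (edgeOf_app η x _).symm) _ _ _ _)

def ofPresheafMap : ofPresheaf F ⟶ ofPresheaf F' where
  left := TypeCat.ofHom fun x => ⟨x.1, x.2.1, η.app _ x.2.2⟩
  right := (multigraphHom η).toPrefunctor
  w := by
    ext ⟨m, n, x⟩
    refine paral_hom_ext (vertexOf_app η x _) (vertexOf_app η x _) (mapPath_pathAOf η x).symm ?_
    exact (Path.cast_heq _ _ _).trans
      ((mapPath_pathBOf η x).symm.trans (Prefunctor.mapPath_cast_heq ..).symm)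

end OfPresheafFunctor

def ofPresheafFunctor : (Shape.{u} ⥤ Type u) ⥤ TwoComputad.{u} where
  obj := ofPresheaf
  map := ofPresheafMap

section Unit

variable (c : TwoComputad.{u})

def cellsEquiv : c.left ≃ Σ m n : ℕ, c.cells (.cell m n) where
  toFun x := ⟨_, _, x, rfl, rfl⟩
  invFun y := y.2.2.1
  left_inv _ := rfl
  right_inv := by
    rintro ⟨_, _, _, rfl, rfl⟩
    rfl

lemma boundaryOf_cellsEquiv (x : c.left) :
    boundaryOf (F := c.toPresheaf) (c.cellsEquiv x).2.2 =
      parallelPairsOfPaths.map (Multigraph.ofQuiverIso c.right).hom (c.hom x) :=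
  paral_hom_ext (Path.getVert_zero (pathA (c.hom x)))
    (Path.getVert_of_length_le (pathA (c.hom x)) le_rfl)
    (Multigraph.path_getEdge_heq (pathA (c.hom x)))
    ((Path.cast_heq _ _ _).trans (Multigraph.path_getEdge_heq (pathB (c.hom x))))

def unitIso : 𝟭 TwoComputad.{u} ≅ toPresheafFunctor ⋙ ofPresheafFunctor :=
  NatIso.ofComponents
    (fun c => Comma.isoMk c.cellsEquiv.toIso (Multigraph.ofQuiverIso c.right)
      (by ext x; exact boundaryOf_cellsEquiv c x))
    fun _ => by
      ext x
      · exact (cellsEquiv _).symm.injective rfl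
      · rfl

end Unit

section Counit

variable {F : Shape.{u} ⥤ Type u}

lemma length_pathA_ofPresheaf (y : (ofPresheaf F).left) :
    (pathA ((ofPresheaf F).hom y)).length = y.1 :=
  Multigraph.length_path ..

lemma length_pathB_ofPresheaf (y : (ofPresheaf F).left) :
    (pathB ((ofPresheaf F).hom y)).length = y.2.1 :=
  (Path.length_cast _ _ _).trans (Multigraph.length_path ..)

def cellsOfPresheafEquiv (m n : ℕ) : (ofPresheaf F).cells (.cell m n) ≃ F.obj (.cell m n) :=
  (Equiv.subtypeEquivRight fun y => by
      rw [length_pathA_ofPresheaf, length_pathB_ofPresheaf]).trans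
    (Equiv.sigmaSigmaSubtypeEq m n)

section

variable {m n : ℕ} (x : F.obj (.cell m n))

lemma cellVertex_ofPresheaf (i : CellVert m n) :
    cellVertex ((cellsOfPresheafEquiv m n).symm x) i = vertexOf x i := by
  induction i using Quot.ind with
  | mk i =>
    rcases i with i | i
    · exact Multigraph.getVert_path _ _ _ _ _ _ i
    · exact (Path.getVert_cast ..).trans (Multigraph.getVert_path _ _ _ _ _ _ i)

lemma cellEdge_ofPresheaf (i : Fin m ⊕ Fin n) :
    (cellEdge ((cellsOfPresheafEquiv m n).symm x) i).hom.1 = edgeOf x i := by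
  rcases i with i | i
  · exact congrArg (fun e : Total (multigraph F).V => e.hom.1)
      (Multigraph.getEdge_path _ _ _ _ _ _ i)
  · exact congrArg (fun e : Total (multigraph F).V => e.hom.1)
      ((Path.getEdge_cast _ _ _ _ (i.isLt.trans_eq (Multigraph.length_path ..).symm)).trans
        (Multigraph.getEdge_path _ _ _ _ _ _ i))

end

variable (F) in
def counitApp : toPresheaf (ofPresheaf F) ≅ F :=
  NatIso.ofComponents
    (fun
      | .vertex => Iso.refl _
      | .arrow => (multigraph F).totalEquiv.toIso
      | .cell m n => (cellsOfPresheafEquiv m n).toIso)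
    fun {X Y} (f : Shape.Hom X Y) => by
      cases f with
      | id => ext y; exact (F.map_id_apply _ _).symm
      | src => ext e; exact e.hom.2.1.symm
      | tgt => ext e; exact e.hom.2.2.symm
      | vertex i =>
        ext y
        obtain ⟨x, rfl⟩ := (cellsOfPresheafEquiv _ _).symm.surjective y
        exact cellVertex_ofPresheaf x i
      | edge i =>
        ext y
        obtain ⟨x, rfl⟩ := (cellsOfPresheafEquiv _ _).symm.surjective y
        exact cellEdge_ofPresheaf x i

def counitIso : ofPresheafFunctor ⋙ toPresheafFunctor ≅ 𝟭 (Shape.{u} ⥤ Type u) :=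
  NatIso.ofComponents counitApp fun _ => by
    ext (_ | _ | _) y
    · rfl
    · rfl
    · obtain ⟨x, rfl⟩ := (cellsOfPresheafEquiv _ _).symm.surjective y
      rfl

end Counit

def presheafEquivalence : TwoComputad.{u} ≌ (Shape.{u} ⥤ Type u) :=
  .mk toPresheafFunctor ofPresheafFunctor unitIso counitIso

end TwoComputad

/-- **Schanuel's observation**: the category of 2-computads, i.e. the comma category of
`Type` over the functor `X ↦ (paral ⟶ T₁.obj X)`, is a presheaf category. -/
theorem twoComputad_presheafCategory :
    ∃ (E : Type u) (_ : SmallCategory E),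
      Nonempty (Comma (𝟭 (Type u)) parallelPairsOfPaths.{u} ≌ E ⥤ Type u) :=
  ⟨TwoComputad.Shape, inferInstance, ⟨TwoComputad.presheafEquivalence⟩⟩
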